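/- For every integer k ≥ 2, as N → ∞, ∑_{k-free n with 1 ≤ n ≤ N} 1/( n_{(k−1)-free} · φ(n_{(k−1)-power}) ) ∼ log N, i.e. the ratio of the two sides tends to 1. -/

import Mathlib

open Filter
open scoped Classical

/-- `n` is `k`-free: no `k`-th power of a prime divides `n`. -/
def KFree (k n : ℕ) : Prop := ∀ p : ℕ, p.Prime → ¬ p ^ k ∣ n

/-- The `m`-free part of `n`: each prime `p` appearing with exponent `e` in `n` contributes
`p ^ (e % m)`.  In particular the `1`-free part of any `n` is `1`. -/
def freePart (m n : ℕ) : ℕ := n.factorization.prod fun p e => p ^ (e % m)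

/-- The `m`-power part of `n`: each prime `p` appearing with exponent `e` in `n` contributes
`p ^ (m * (e / m))`, so the result is a perfect `m`-th power, and
`n = freePart m n * powerPart m n`.  In particular the `1`-power part of `n` is `n` itself. -/
def powerPart (m n : ℕ) : ℕ := n.factorization.prod fun p e => p ^ (m * (e / m))

/-!
Write `m = k - 1`. For an `(m+1)`-free `n`, the primes `p` with `p ^ m ∣ n` are exactly those
dividing `n_{m-power}`, and Euler's product formula gives
`1 / (n_{m-free} φ(n_{m-power})) = n⁻¹ ∏_{p ∣ n_{m-power}} (1 - p⁻¹)⁻¹ = ∑_t (n t)⁻¹`,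
`t` running over the integers all of whose primes divide `n_{m-power}`. Every `x ≥ 1` is `n t`
for exactly one such pair (`n` is `x` with every exponent truncated at `m`), so the double sum
over `n ≤ N` dominates the harmonic number `H_N ≥ log N`. Conversely the pairs with `t < T`
contribute at most `H_{NT} ≤ 1 + log N + log T`; for the others `rad t ∣ n`, so they contribute
at most `H_N ∑_{t ≥ T} 1 / (t rad t)`, an arbitrarily small multiple of `log N` for large `T`
because `∑ 1 / (t rad t) = ∏_p (1 + 1 / (p (p - 1)))` converges.
-/

open Finset UniqueFactorizationMonoid Topology
open scoped Nat

/-! ### Prime exponents -/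

theorem factorization_prod_pow_apply (F : ℕ → ℕ) (hF : F 0 = 0) (n p : ℕ) :
    (n.factorization.prod fun p e => p ^ F e).factorization p = F (n.factorization p) := by
  rw [← Finsupp.prod_mapRange_index (h0 := fun p => pow_zero p) (hf := hF),
    Nat.prod_pow_factorization_eq_self fun q hq => ?_, Finsupp.mapRange_apply]
  exact Nat.prime_of_mem_primeFactors (Finsupp.support_mapRange hq)

theorem mem_primeFactors_iff_factorization_ne_zero {n p : ℕ} :
    p ∈ n.primeFactors ↔ n.factorization p ≠ 0 := by
  rw [← Nat.support_factorization, Finsupp.mem_support_iff]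

theorem freePart_mul_powerPart (m : ℕ) {n : ℕ} (hn : n ≠ 0) :
    freePart m n * powerPart m n = n := by
  conv_rhs => rw [← Nat.prod_factorization_pow_eq_self hn]
  rw [freePart, powerPart, ← Finsupp.prod_mul]
  simp only [← pow_add, Nat.mod_add_div]

theorem powerPart_dvd (m : ℕ) {n : ℕ} (hn : n ≠ 0) : powerPart m n ∣ n :=
  Dvd.intro_left _ (freePart_mul_powerPart m hn)

theorem mem_primeFactors_powerPart {m n p : ℕ} (hm : m ≠ 0) :
    p ∈ (powerPart m n).primeFactors ↔ m ≤ n.factorization p := by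
  rw [mem_primeFactors_iff_factorization_ne_zero, powerPart,
    factorization_prod_pow_apply _ (by simp), mul_ne_zero_iff, Nat.div_ne_zero_iff]
  exact ⟨fun h => h.2.2, fun h => ⟨hm, hm, h⟩⟩

theorem kFree_iff_factorization_lt {k n : ℕ} (hn : n ≠ 0) :
    KFree k n ↔ ∀ p, n.factorization p < k := by
  refine ⟨fun h p => ?_, fun h p hp hdvd => ?_⟩
  · by_cases hp : p.Prime
    · exact lt_of_not_ge fun hle => h p hp ((hp.pow_dvd_iff_le_factorization hn).2 hle)
    · rw [Nat.factorization_eq_zero_of_not_prime n hp]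
      exact Nat.pos_of_ne_zero fun hk => h 2 Nat.prime_two (by simp [hk])
  · exact (h p).not_ge ((hp.pow_dvd_iff_le_factorization hn).1 hdvd)

def truncPart (m n : ℕ) : ℕ := n.factorization.prod fun p e => p ^ min e m

theorem factorization_truncPart (m n p : ℕ) :
    (truncPart m n).factorization p = min (n.factorization p) m :=
  factorization_prod_pow_apply _ (Nat.zero_min m) n p

theorem truncPart_ne_zero (m n : ℕ) : truncPart m n ≠ 0 :=
  Finsupp.prod_ne_zero_iff.2 fun _ hp =>
    pow_ne_zero _ (Nat.prime_of_mem_primeFactors (Nat.support_factorization n ▸ hp)).ne_zero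

theorem truncPart_dvd (m n : ℕ) : truncPart m n ∣ n := by
  rcases eq_or_ne n 0 with rfl | hn
  · exact dvd_zero _
  rw [← Nat.factorization_le_iff_dvd (truncPart_ne_zero m n) hn]
  intro p
  rw [factorization_truncPart]
  exact min_le_left _ _

theorem kFree_truncPart (m n : ℕ) : KFree (m + 1) (truncPart m n) := by
  rw [kFree_iff_factorization_lt (truncPart_ne_zero m n)]
  intro p
  rw [factorization_truncPart]
  omega

def powerSupported (m n : ℕ) : Set ℕ := Nat.factoredNumbers (powerPart m n).primeFactors

theorem mem_powerSupported {m n t : ℕ} (hm : m ≠ 0) :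
    t ∈ powerSupported m n ↔ t ≠ 0 ∧ ∀ p ∈ t.primeFactors, m ≤ n.factorization p := by
  simp only [powerSupported, Nat.mem_factoredNumbers_iff_primeFactors_subset, Finset.subset_iff,
    mem_primeFactors_powerPart hm]

theorem truncPart_mul_of_mem_powerSupported {m n t : ℕ} (hm : m ≠ 0) (hn : n ≠ 0)
    (hkf : KFree (m + 1) n) (ht : t ∈ powerSupported m n) : truncPart m (n * t) = n := by
  obtain ⟨ht0, hsupp⟩ := (mem_powerSupported hm).1 ht
  refine Nat.eq_of_factorization_eq (truncPart_ne_zero m _) hn fun p => ?_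
  have hle := (kFree_iff_factorization_lt hn).1 hkf p
  rw [factorization_truncPart, Nat.factorization_mul hn ht0, Finsupp.add_apply]
  by_cases hp : p ∈ t.primeFactors
  · have := hsupp p hp
    omega
  · rw [mem_primeFactors_iff_factorization_ne_zero, not_not] at hp
    omega

theorem div_truncPart_mem_powerSupported {m n : ℕ} (hm : m ≠ 0) (hn : n ≠ 0) :
    n / truncPart m n ∈ powerSupported m (truncPart m n) := by
  set c := truncPart m n
  have hc : c ≠ 0 := truncPart_ne_zero m n
  obtain ⟨t, ht⟩ : c ∣ n := truncPart_dvd m n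
  have ht0 : t ≠ 0 := by rintro rfl; exact hn (by simpa using ht)
  have hdiv : n / c = t := by rw [ht, Nat.mul_div_cancel_left _ (Nat.pos_of_ne_zero hc)]
  rw [hdiv, mem_powerSupported hm]
  refine ⟨ht0, fun p hp => ?_⟩
  have hsplit := congrArg (·.factorization p) ht
  simp only [Nat.factorization_mul hc ht0, Finsupp.add_apply] at hsplit
  have hcp : c.factorization p = min (n.factorization p) m := factorization_truncPart m n p
  have := mem_primeFactors_iff_factorization_ne_zero.1 hp
  omega

theorem radical_dvd_of_mem_powerSupported {m n t : ℕ} (hn : n ≠ 0)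
    (ht : t ∈ powerSupported m n) : radical t ∣ n :=
  (Nat.radical_dvd_iff hn).2 ((Nat.primeFactors_subset_of_mem_factoredNumbers ht).trans
    (Nat.primeFactors_mono (powerPart_dvd m hn) hn))

/-! ### Euler products -/

theorem hasSum_inv_factoredNumbers {s : Finset ℕ} (hs : ∀ p ∈ s, p.Prime) :
    HasSum (fun t : Nat.factoredNumbers s => ((t : ℕ) : ℝ)⁻¹) (∏ p ∈ s, (1 - (p : ℝ)⁻¹)⁻¹) := by
  have h := (EulerProduct.summable_and_hasSum_factoredNumbers_prod_filter_prime_geometric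
    (f := (invMonoidHom : ℝ →* ℝ).comp (Nat.castRingHom ℝ)) (fun {p} hp => ?_) s).2
  · simpa [Finset.filter_true_of_mem hs] using h
  · simpa using inv_lt_one_of_one_lt₀ (Nat.one_lt_cast.2 hp.one_lt)

theorem summable_of_multiplicative_of_prod_le {f : ℕ → ℝ} (hf0 : f 0 = 0) (hf1 : f 1 = 1)
    (hnonneg : ∀ n, 0 ≤ f n) (hmul : ∀ {a b : ℕ}, Nat.Coprime a b → f (a * b) = f a * f b)
    (hsum : ∀ {p : ℕ}, p.Prime → Summable fun j => f (p ^ j)) {C : ℝ}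
    (hC : ∀ s : Finset ℕ, ∏ p ∈ s with p.Prime, ∑' j, f (p ^ j) ≤ C) : Summable f := by
  refine summable_of_sum_le (c := C) hnonneg fun u => ?_
  set s := range (u.sup id + 1)
  have hhas := (EulerProduct.summable_and_hasSum_factoredNumbers_prod_filter_prime_tsum hf1 hmul
    (fun hp => by simpa only [Real.norm_eq_abs] using (hsum hp).abs) s).2
  have hmem : ∀ t ∈ u, t ≠ 0 → t ∈ Nat.factoredNumbers s := fun t ht ht0 =>
    Nat.mem_factoredNumbers'.2 fun p _ hpt => Finset.mem_range.2 <| Nat.lt_succ_of_le <|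
      (Nat.le_of_dvd (Nat.pos_of_ne_zero ht0) hpt).trans (Finset.le_sup (f := id) ht)
  calc ∑ t ∈ u, f t = ∑ t ∈ u, (Nat.factoredNumbers s).indicator f t :=
        Finset.sum_congr rfl fun t ht => by
          rcases eq_or_ne t 0 with rfl | ht0
          · simp [Set.indicator_apply, hf0]
          · rw [Set.indicator_of_mem (hmem t ht ht0)]
    _ ≤ ∑' t, (Nat.factoredNumbers s).indicator f t :=
        (summable_subtype_iff_indicator.1 hhas.summable).sum_le_tsum _
          fun t _ => Set.indicator_nonneg (fun t _ => hnonneg t) t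
    _ = ∏ p ∈ s with p.Prime, ∑' j, f (p ^ j) := by rw [← _root_.tsum_subtype, hhas.tsum_eq]
    _ ≤ C := hC s

noncomputable def invMulRadical (t : ℕ) : ℝ := ((t * radical t : ℕ) : ℝ)⁻¹

theorem invMulRadical_nonneg (t : ℕ) : 0 ≤ invMulRadical t := by
  unfold invMulRadical
  positivity

theorem invMulRadical_mul {a b : ℕ} (h : Nat.Coprime a b) :
    invMulRadical (a * b) = invMulRadical a * invMulRadical b := by
  simp only [invMulRadical, radical_mul (Nat.coprime_iff_isRelPrime.1 h)]
  push_cast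
  ring

theorem invMulRadical_prime_pow_succ {p : ℕ} (hp : p.Prime) (j : ℕ) :
    invMulRadical (p ^ (j + 1)) = ((p : ℝ)⁻¹) ^ 2 * ((p : ℝ)⁻¹) ^ j := by
  rw [invMulRadical, radical_pow_of_prime hp.prime (Nat.succ_ne_zero j), normalize_eq]
  push_cast
  ring

theorem hasSum_invMulRadical_prime_pow {p : ℕ} (hp : p.Prime) :
    HasSum (fun j => invMulRadical (p ^ j)) (1 + ((p : ℝ)⁻¹) ^ 2 * (1 - (p : ℝ)⁻¹)⁻¹) := by
  have hlt : (p : ℝ)⁻¹ < 1 := inv_lt_one_of_one_lt₀ (Nat.one_lt_cast.2 hp.one_lt)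
  have hone : invMulRadical 1 = 1 := by simp [invMulRadical]
  rw [← hasSum_nat_add_iff' 1]
  simp only [invMulRadical_prime_pow_succ hp, Finset.range_one, Finset.sum_singleton, pow_zero,
    hone, add_sub_cancel_left]
  exact (hasSum_geometric_of_lt_one (by positivity) hlt).mul_left _

theorem tsum_invMulRadical_prime_pow_le {p : ℕ} (hp : p.Prime) :
    ∑' j, invMulRadical (p ^ j) ≤ 1 + 2 * ((p : ℝ) ^ 2)⁻¹ := by
  have hp2 : (2 : ℝ) ≤ p := Nat.ofNat_le_cast.2 hp.two_le
  have hinv : (p : ℝ)⁻¹ ≤ 2⁻¹ := inv_anti₀ two_pos hp2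
  have hhalf : (1 - (p : ℝ)⁻¹)⁻¹ ≤ 2 := by
    rw [inv_le_comm₀ (by linarith) two_pos]
    linarith
  have := mul_le_mul_of_nonneg_left hhalf (by positivity : 0 ≤ ((p : ℝ) ^ 2)⁻¹)
  rw [(hasSum_invMulRadical_prime_pow hp).tsum_eq, inv_pow]
  linarith

theorem summable_invMulRadical : Summable invMulRadical := by
  have hsq : Summable fun n : ℕ => 2 * ((n : ℝ) ^ 2)⁻¹ :=
    (Real.summable_nat_pow_inv.2 one_lt_two).mul_left 2
  refine summable_of_multiplicative_of_prod_le (by simp [invMulRadical])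
    (by simp [invMulRadical]) invMulRadical_nonneg invMulRadical_mul
    (fun hp => (hasSum_invMulRadical_prime_pow hp).summable)
    (C := Real.exp (∑' n : ℕ, 2 * ((n : ℝ) ^ 2)⁻¹)) fun s => ?_
  calc ∏ p ∈ s with p.Prime, ∑' j, invMulRadical (p ^ j)
        ≤ ∏ p ∈ s with p.Prime, (1 + 2 * ((p : ℝ) ^ 2)⁻¹) :=
          Finset.prod_le_prod (fun p _ => tsum_nonneg fun j => invMulRadical_nonneg _)
            fun p hp => tsum_invMulRadical_prime_pow_le (Finset.mem_filter.1 hp).2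
    _ ≤ Real.exp (∑ p ∈ s with p.Prime, 2 * ((p : ℝ) ^ 2)⁻¹) :=
          Real.prod_one_add_le_exp_sum _ fun p => by positivity
    _ ≤ Real.exp (∑' n : ℕ, 2 * ((n : ℝ) ^ 2)⁻¹) :=
          Real.exp_le_exp.2 (hsq.sum_le_tsum _ fun n _ => by positivity)

/-! ### Harmonic sums -/

theorem cast_harmonic_eq_sum_Icc (N : ℕ) : (harmonic N : ℝ) = ∑ n ∈ Icc 1 N, (n : ℝ)⁻¹ := by
  rw [harmonic_eq_sum_Icc]
  push_cast
  rfl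

theorem sum_inv_le_harmonic_of_injOn {ι : Type*} {s : Finset ι} {f : ι → ℕ} {M : ℕ}
    (hf : Set.InjOn f s) (hs : ∀ i ∈ s, f i ∈ Icc 1 M) :
    ∑ i ∈ s, ((f i : ℕ) : ℝ)⁻¹ ≤ harmonic M := by
  rw [← Finset.sum_image (f := fun x : ℕ => (x : ℝ)⁻¹) hf, cast_harmonic_eq_sum_Icc]
  exact Finset.sum_le_sum_of_subset_of_nonneg (Finset.image_subset_iff.2 hs)
    fun _ _ _ => by positivity

theorem sum_inv_multiples_le {r : ℕ} (hr : 0 < r) (N : ℕ) :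
    ∑ n ∈ Icc 1 N with r ∣ n, (n : ℝ)⁻¹ ≤ (r : ℝ)⁻¹ * harmonic N := by
  have hterm : ∀ n ∈ {n ∈ Icc 1 N | r ∣ n}, (n : ℝ)⁻¹ = (r : ℝ)⁻¹ * ((n / r : ℕ) : ℝ)⁻¹ := by
    intro n hn
    rw [← mul_inv, ← Nat.cast_mul, Nat.mul_div_cancel' (Finset.mem_filter.1 hn).2]
  rw [Finset.sum_congr rfl hterm, ← Finset.mul_sum]
  refine mul_le_mul_of_nonneg_left (sum_inv_le_harmonic_of_injOn ?_ ?_) (by positivity)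
  · intro a ha b hb hab
    exact (Nat.div_left_inj (Finset.mem_filter.1 ha).2 (Finset.mem_filter.1 hb).2).1 hab
  · intro n hn
    obtain ⟨hnN, hrn⟩ := Finset.mem_filter.1 hn
    rw [Finset.mem_Icc] at hnN ⊢
    exact ⟨Nat.div_pos (Nat.le_of_dvd hnN.1 hrn) hr, (Nat.div_le_self n r).trans hnN.2⟩

/-! ### Expanding the summand -/

theorem cast_freePart_mul_totient_powerPart (m : ℕ) {n : ℕ} (hn : n ≠ 0) :
    ((freePart m n * φ (powerPart m n) : ℕ) : ℝ)
      = n * ∏ p ∈ (powerPart m n).primeFactors, (1 - (p : ℝ)⁻¹) := by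
  have h := congrArg (Rat.cast : ℚ → ℝ) (Nat.totient_eq_mul_prod_factors (powerPart m n))
  push_cast at h
  rw [Nat.cast_mul, h, ← mul_assoc, ← Nat.cast_mul, freePart_mul_powerPart m hn]

noncomputable def termExpansion (m n t : ℕ) : ℝ :=
  if KFree (m + 1) n ∧ t ∈ powerSupported m n then ((n * t : ℕ) : ℝ)⁻¹ else 0

theorem termExpansion_nonneg (m n t : ℕ) : 0 ≤ termExpansion m n t := by
  unfold termExpansion
  split_ifs <;> positivity

theorem hasSum_termExpansion (m : ℕ) {n : ℕ} (hn : n ≠ 0) :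
    HasSum (termExpansion m n)
      (if KFree (m + 1) n then 1 / ((freePart m n * φ (powerPart m n) : ℕ) : ℝ) else 0) := by
  by_cases hkf : KFree (m + 1) n
  · have heq : termExpansion m n = (powerSupported m n).indicator fun t => ((n * t : ℕ) : ℝ)⁻¹ := by
      ext t
      simp only [termExpansion, hkf, true_and, Set.indicator_apply]
    rw [heq, if_pos hkf, cast_freePart_mul_totient_powerPart m hn, one_div, mul_inv,
      ← Finset.prod_inv_distrib]
    refine hasSum_subtype_iff_indicator.mp ?_
    have hsplit : (fun t : ℕ => ((n * t : ℕ) : ℝ)⁻¹) ∘ Subtype.val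
        = fun t : powerSupported m n => (n : ℝ)⁻¹ * ((t : ℕ) : ℝ)⁻¹ := by
      funext t
      push_cast
      exact mul_inv _ _
    rw [hsplit]
    exact (hasSum_inv_factoredNumbers fun p hp => Nat.prime_of_mem_primeFactors hp).mul_left _
  · have heq : termExpansion m n = 0 := by
      ext t
      simp only [termExpansion, hkf, false_and, if_false, Pi.zero_apply]
    rw [heq, if_neg hkf]
    exact hasSum_zero

theorem summable_termExpansion (m n : ℕ) : Summable (termExpansion m n) := by
  rcases eq_or_ne n 0 with rfl | hn
  · have hkf : ¬KFree (m + 1) 0 := fun h => h 2 Nat.prime_two (dvd_zero _)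
    have hzero : termExpansion m 0 = 0 := by
      ext t
      simp [termExpansion, hkf]
    exact hzero ▸ summable_zero
  · exact (hasSum_termExpansion m hn).summable

theorem termExpansion_div_of_truncPart_eq {m n x : ℕ} (hm : m ≠ 0) (hx : x ≠ 0)
    (hn : truncPart m x = n) :
    termExpansion m n (x / n) = (x : ℝ)⁻¹ := by
  subst hn
  rw [termExpansion, if_pos ⟨kFree_truncPart m x, div_truncPart_mem_powerSupported hm hx⟩,
    Nat.mul_div_cancel' (truncPart_dvd m x)]

theorem harmonic_le_sum_tsum_termExpansion {m : ℕ} (hm : m ≠ 0) (N : ℕ) :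
    harmonic N ≤ ∑ n ∈ Icc 1 N, ∑' t, termExpansion m n t := by
  have hmaps : ∀ x ∈ Icc 1 N, truncPart m x ∈ Icc 1 N := fun x hx => by
    rw [Finset.mem_Icc] at hx ⊢
    exact ⟨Nat.pos_of_ne_zero (truncPart_ne_zero m x),
      (Nat.le_of_dvd hx.1 (truncPart_dvd m x)).trans hx.2⟩
  rw [cast_harmonic_eq_sum_Icc, ← Finset.sum_fiberwise_of_maps_to hmaps]
  refine Finset.sum_le_sum fun n _ => ?_
  set fiber := {x ∈ Icc 1 N | truncPart m x = n}
  have hfiber : ∀ x ∈ fiber, x ≠ 0 ∧ truncPart m x = n := fun x hx => by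
    obtain ⟨hxN, hxn⟩ := Finset.mem_filter.1 hx
    exact ⟨Nat.one_le_iff_ne_zero.1 (Finset.mem_Icc.1 hxN).1, hxn⟩
  have hinj : Set.InjOn (· / n) fiber := fun a ha b hb hab => by
    obtain ⟨ha0, rfl⟩ := hfiber a ha
    obtain ⟨hb0, hbn⟩ := hfiber b hb
    exact (Nat.div_left_inj (truncPart_dvd m a) (hbn ▸ truncPart_dvd m b)).1 hab
  calc ∑ x ∈ fiber, (x : ℝ)⁻¹ = ∑ x ∈ fiber, termExpansion m n (x / n) :=
        Finset.sum_congr rfl fun x hx =>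
          (termExpansion_div_of_truncPart_eq hm (hfiber x hx).1 (hfiber x hx).2).symm
    _ = ∑ t ∈ fiber.image (· / n), termExpansion m n t := (Finset.sum_image hinj).symm
    _ ≤ ∑' t, termExpansion m n t :=
        (summable_termExpansion m n).sum_le_tsum _ fun t _ => termExpansion_nonneg m n t

theorem sum_sum_range_termExpansion_le_harmonic {m : ℕ} (hm : m ≠ 0) (N T : ℕ) :
    ∑ n ∈ Icc 1 N, ∑ t ∈ range T, termExpansion m n t ≤ harmonic (N * T) := by
  set P := {x ∈ Icc 1 N ×ˢ range T | KFree (m + 1) x.1 ∧ x.2 ∈ powerSupported m x.1}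
  have hP : ∀ x ∈ P, x.1 ≠ 0 ∧ x.2 ≠ 0 ∧ x.1 ≤ N ∧ x.2 < T ∧ KFree (m + 1) x.1 ∧
      x.2 ∈ powerSupported m x.1 := fun x hx => by
    simp only [P, Finset.mem_filter, Finset.mem_product, Finset.mem_Icc, Finset.mem_range] at hx
    exact ⟨by omega, Nat.ne_zero_of_mem_factoredNumbers hx.2.2, hx.1.1.2, hx.1.2, hx.2⟩
  calc ∑ n ∈ Icc 1 N, ∑ t ∈ range T, termExpansion m n t
        = ∑ x ∈ P, ((x.1 * x.2 : ℕ) : ℝ)⁻¹ := by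
          rw [Finset.sum_filter, Finset.sum_product]
          rfl
    _ ≤ harmonic (N * T) := by
      refine sum_inv_le_harmonic_of_injOn (f := fun x : ℕ × ℕ => x.1 * x.2)
        (fun x hx y hy hxy => ?_) fun x hx => ?_
      · obtain ⟨hx1, -, -, -, hxk, hxt⟩ := hP x hx
        obtain ⟨hy1, -, -, -, hyk, hyt⟩ := hP y hy
        have h1 : x.1 = y.1 := by
          rw [← truncPart_mul_of_mem_powerSupported hm hx1 hxk hxt,
            ← truncPart_mul_of_mem_powerSupported hm hy1 hyk hyt]
          exact congrArg (truncPart m) hxy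
        have h2 : x.2 = y.2 := by
          simp only [h1] at hxy
          exact Nat.eq_of_mul_eq_mul_left (Nat.pos_of_ne_zero hy1) hxy
        exact Prod.ext h1 h2
      · obtain ⟨hx1, hx2, hxN, hxT, -⟩ := hP x hx
        rw [Finset.mem_Icc]
        exact ⟨Nat.pos_of_ne_zero (Nat.mul_ne_zero hx1 hx2), Nat.mul_le_mul hxN hxT.le⟩

theorem sum_termExpansion_le_harmonic_mul (m N t : ℕ) :
    ∑ n ∈ Icc 1 N, termExpansion m n t ≤ harmonic N * invMulRadical t := by
  calc ∑ n ∈ Icc 1 N, termExpansion m n t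
        ≤ ∑ n ∈ Icc 1 N with radical t ∣ n, (n : ℝ)⁻¹ * (t : ℝ)⁻¹ := by
          rw [Finset.sum_filter]
          refine Finset.sum_le_sum fun n hn => ?_
          have hn0 : n ≠ 0 := by rw [Finset.mem_Icc] at hn; omega
          unfold termExpansion
          split_ifs with h hdvd hdvd
          · rw [Nat.cast_mul, mul_inv]
          · exact absurd (radical_dvd_of_mem_powerSupported hn0 h.2) hdvd
          · positivity
          · rfl
    _ = (∑ n ∈ Icc 1 N with radical t ∣ n, (n : ℝ)⁻¹) * (t : ℝ)⁻¹ := (Finset.sum_mul ..).symm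
    _ ≤ (((radical t : ℕ) : ℝ)⁻¹ * harmonic N) * (t : ℝ)⁻¹ := by
          gcongr
          exact sum_inv_multiples_le (Nat.radical_pos t) N
    _ = harmonic N * invMulRadical t := by
          rw [invMulRadical]
          push_cast
          ring

theorem sum_tsum_termExpansion_le_harmonic_add {m : ℕ} (hm : m ≠ 0) (N T : ℕ) :
    ∑ n ∈ Icc 1 N, ∑' t, termExpansion m n t
      ≤ harmonic (N * T) + harmonic N * ∑' t, invMulRadical (t + T) := by
  have hsummable : ∀ n ∈ Icc 1 N, Summable fun t => termExpansion m n (t + T) :=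
    fun n _ => (summable_nat_add_iff T).2 (summable_termExpansion m n)
  have hsplit : ∀ n, ∑' t, termExpansion m n t
      = ∑ t ∈ range T, termExpansion m n t + ∑' t, termExpansion m n (t + T) :=
    fun n => ((summable_termExpansion m n).sum_add_tsum_nat_add T).symm
  calc ∑ n ∈ Icc 1 N, ∑' t, termExpansion m n t
        = ∑ n ∈ Icc 1 N, ∑ t ∈ range T, termExpansion m n t
          + ∑' t, ∑ n ∈ Icc 1 N, termExpansion m n (t + T) := by
          rw [Finset.sum_congr rfl fun n _ => hsplit n, Finset.sum_add_distrib,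
            Summable.tsum_finsetSum hsummable]
    _ ≤ harmonic (N * T) + ∑' t, harmonic N * invMulRadical (t + T) :=
          add_le_add (sum_sum_range_termExpansion_le_harmonic hm N T)
            (Summable.tsum_le_tsum (fun t => sum_termExpansion_le_harmonic_mul m N (t + T))
              (summable_sum hsummable)
              (((summable_nat_add_iff T).2 summable_invMulRadical).mul_left _))
    _ = harmonic (N * T) + harmonic N * ∑' t, invMulRadical (t + T) := by rw [tsum_mul_left]

/-! ### Asymptotics -/

theorem log_le_sum_tsum_termExpansion {m : ℕ} (hm : m ≠ 0) (N : ℕ) :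
    Real.log N ≤ ∑ n ∈ Icc 1 N, ∑' t, termExpansion m n t :=
  calc Real.log N ≤ harmonic N := by simpa using log_le_harmonic_floor (N : ℝ) N.cast_nonneg
    _ ≤ _ := harmonic_le_sum_tsum_termExpansion hm N

theorem exists_sum_tsum_termExpansion_le_log {m : ℕ} (hm : m ≠ 0) {ε : ℝ} (hε : 0 < ε) :
    ∃ C, ∀ᶠ N : ℕ in atTop,
      ∑ n ∈ Icc 1 N, ∑' t, termExpansion m n t ≤ (1 + ε) * Real.log N + C := by
  obtain ⟨T, hT, htail⟩ := ((eventually_ge_atTop 1).and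
    ((tendsto_sum_nat_add invMulRadical).eventually (eventually_le_nhds hε))).exists
  refine ⟨1 + Real.log T + ε, (eventually_ge_atTop 1).mono fun N hN => ?_⟩
  have hH : (harmonic N : ℝ) ≤ 1 + Real.log N := harmonic_le_one_add_log N
  have hHT : (harmonic (N * T) : ℝ) ≤ 1 + Real.log N + Real.log T := by
    have := harmonic_le_one_add_log (N * T)
    rwa [Nat.cast_mul, Real.log_mul (by positivity) (by positivity), ← add_assoc] at this
  have hlog : 0 ≤ Real.log N := Real.log_natCast_nonneg N
  calc ∑ n ∈ Icc 1 N, ∑' t, termExpansion m n t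
        ≤ harmonic (N * T) + harmonic N * ∑' t, invMulRadical (t + T) :=
          sum_tsum_termExpansion_le_harmonic_add hm N T
    _ ≤ (1 + Real.log N + Real.log T) + (1 + Real.log N) * ε := by
          gcongr
          exact tsum_nonneg fun t => invMulRadical_nonneg _
    _ = (1 + ε) * Real.log N + (1 + Real.log T + ε) := by ring

theorem tendsto_div_nhds_one_of_le_of_forall_le {α : Type*} {l : Filter α} {f g : α → ℝ}
    (hg : Tendsto g l atTop) (hlow : ∀ᶠ x in l, g x ≤ f x)
    (hup : ∀ ε > 0, ∃ C, ∀ᶠ x in l, f x ≤ (1 + ε) * g x + C) :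
    Tendsto (fun x => f x / g x) l (𝓝 1) := by
  rw [tendsto_order]
  refine ⟨fun a ha => ?_, fun a ha => ?_⟩
  · filter_upwards [hlow, hg.eventually_gt_atTop 0] with x hfx hgx
    rw [lt_div_iff₀ hgx]
    nlinarith
  · obtain ⟨C, hC⟩ := hup ((a - 1) / 2) (by linarith)
    filter_upwards [hC, hg.eventually_gt_atTop (2 * C / (a - 1)), hg.eventually_gt_atTop 0]
      with x hfx hCx hgx
    rw [div_lt_iff₀ (by linarith), mul_comm] at hCx
    rw [div_lt_iff₀ hgx]
    linarith

/-- For every `k ≥ 2`, the sum over `k`-free `n ≤ N` of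
`1 / (n_{(k-1)-free} · φ(n_{(k-1)-power}))` is asymptotic to `log N` as `N → ∞`. -/
theorem kfree_totient_partial_sum_asymp
    (k : ℕ) (hk : 2 ≤ k) :
    Tendsto
      (fun N : ℕ =>
        (∑ n ∈ Finset.Icc 1 N,
          if KFree k n then
            (1 : ℝ) / ((freePart (k - 1) n * Nat.totient (powerPart (k - 1) n) : ℕ) : ℝ)
          else 0) / Real.log N)
      atTop (nhds 1) := by
  obtain ⟨m, rfl⟩ : ∃ m, k = m + 1 := ⟨k - 1, by omega⟩
  have hm : m ≠ 0 := by omega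
  simp only [Nat.add_sub_cancel]
  have hsum : ∀ N : ℕ, (∑ n ∈ Icc 1 N, if KFree (m + 1) n then
        (1 : ℝ) / ((freePart m n * Nat.totient (powerPart m n) : ℕ) : ℝ) else 0)
      = ∑ n ∈ Icc 1 N, ∑' t, termExpansion m n t := fun N =>
    Finset.sum_congr rfl fun n hn =>
      (hasSum_termExpansion m (Nat.one_le_iff_ne_zero.1 (Finset.mem_Icc.1 hn).1)).tsum_eq.symm
  simp_rw [hsum]
  exact tendsto_div_nhds_one_of_le_of_forall_le
    (Real.tendsto_log_atTop.comp tendsto_natCast_atTop_atTop)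
    (Eventually.of_forall (log_le_sum_tsum_termExpansion hm))
    fun ε hε => exists_sum_tsum_termExpansion_le_log hm hε
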